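/- arXiv:2007.14171 — 3 statements merged into one kernel-verified Lean document; each statement's English description precedes it below -/
import Mathlib

section
/- Let n ∈ ℕ and D ∈ HS^n_k(A,C). Let P_D be the free C-module with basis e_0,…,e_n, endowed with the A-module structure determined by a·(Σ_i c_i e_i) = Σ_i c_i·(Σ_{j=0}^i D_{i-j}(a)·e_j); this is a well-defined A-module structure commuting with the C-action. Then for every A-module M and every C-module N there is a bijection HS^n_D(M,N) ≃ Hom_C(M ⊗_A P_D, N), natural in N; i.e., the functor N ↦ HS^n_D(M,N) from C-modules to sets is represented by the C-module M ⊗_A P_D. -/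
/-!
Since `P_D` is free over `C` with basis `e_0, …, e_n`, a `C`-linear map `φ` out of `P_D ⊗_A M`
is the same as a family of additive maps `Δ_j = φ (e_j ⊗ -)` such that `e_j ⊗ m ↦ Δ_j m` is
`A`-balanced. Comparing coefficients in `a • e_i = Σ_{j ≤ i} D_{i-j}(a) e_j`, balancedness is
exactly the Leibniz rule `Δ_i (a m) = Σ_{p+q=i} D_p(a) Δ_q(m)`. The `Δ_j` are `k`-linear because
the same formula, at `a = r • 1` and at `a = 1`, gives `(r • 1) • e_j = r • e_j`.
-/

open TensorProduct

universe w

/-- A higher derivation of order `n` from `A` to `C` over `k`. -/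
def IsHSDeriv (k : Type*) {A C : Type*} [CommRing k] [CommRing A] [CommRing C]
    [Algebra k A] [Algebra k C] (n : ℕ) (D : Fin (n + 1) → (A →ₗ[k] C)) : Prop :=
  D 0 1 = 1 ∧
    ∀ (i : Fin (n + 1)) (a b : A),
      D i (a * b) =
        ∑ p : Fin (n + 1), ∑ q : Fin (n + 1),
          if (p : ℕ) + (q : ℕ) = (i : ℕ) then D p a * D q b else 0

namespace Fin

variable {n : ℕ}

/-- Unlike `i - j` in `Fin (n + 1)`, this does not wrap around. -/
def truncSub (i j : Fin (n + 1)) : Fin (n + 1) :=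
  ⟨(i : ℕ) - (j : ℕ), Nat.lt_of_le_of_lt (Nat.sub_le _ _) i.isLt⟩

theorem sum_sum_ite_add_eq {β : Type*} [AddCommMonoid β] (i : Fin (n + 1))
    (f : Fin (n + 1) → Fin (n + 1) → β) :
    (∑ p : Fin (n + 1), ∑ q : Fin (n + 1), if (p : ℕ) + q = i then f p q else 0) =
      ∑ j : Fin (n + 1), if (j : ℕ) ≤ i then f (i.truncSub j) j else 0 := by
  rw [Finset.sum_comm]
  refine Finset.sum_congr rfl fun j _ => ?_
  split_ifs with hj
  · have hp : ∀ p : Fin (n + 1), (p : ℕ) + j = i ↔ p = i.truncSub j := fun p => by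
      simp only [Fin.ext_iff, truncSub]
      omega
    simp only [hp, Finset.sum_ite_eq', Finset.mem_univ, if_true]
  · exact Finset.sum_eq_zero fun p _ => if_neg (by omega)

end Fin

section Represent

variable {k A C : Type*} [CommRing k] [CommRing A] [CommRing C] {n : ℕ}
  {P : Type*} [AddCommGroup P] [Module C P] [Module A P] {b : Module.Basis (Fin (n + 1)) C P}

/-- `P` is `P_D`, with basis `b = (e_0, …, e_n)`. -/
def IsHSBasis [Algebra k A] [Algebra k C] (D : Fin (n + 1) → (A →ₗ[k] C))
    (b : Module.Basis (Fin (n + 1)) C P) : Prop :=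
  ∀ (a : A) (i : Fin (n + 1)),
    a • b i = ∑ j : Fin (n + 1), (if (j : ℕ) ≤ i then D (i.truncSub j) a else 0) • b j

theorem IsHSBasis.algebraMap_smul_basis [Algebra k A] [Algebra k C]
    {D : Fin (n + 1) → (A →ₗ[k] C)} (hb : IsHSBasis D b) (r : k) (j : Fin (n + 1)) :
    algebraMap k A r • b j = algebraMap k C r • b j := by
  calc algebraMap k A r • b j
      = algebraMap k C r •
          ∑ i : Fin (n + 1), (if (i : ℕ) ≤ j then D (j.truncSub i) 1 else 0) • b i := by
        simp only [hb _ j, Algebra.algebraMap_eq_smul_one (A := A) r, map_smul, Finset.smul_sum,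
          smul_ite, smul_zero, ← smul_assoc, smul_eq_mul, ← Algebra.smul_def]
    _ = algebraMap k C r • b j := by rw [← hb 1 j, one_smul]

variable [SMulCommClass A C P] {M : Type*} [AddCommGroup M] [Module A M]
  {N : Type*} [AddCommGroup N] [Module C N]

theorem Module.Basis.tmul_eq_sum_repr_smul {ι : Type*} [Fintype ι] (b : Module.Basis ι C P)
    (p : P) (m : M) : p ⊗ₜ[A] m = ∑ i, b.repr p i • (b i ⊗ₜ[A] m) := by
  conv_lhs => rw [← b.sum_repr p]
  simp only [sum_tmul, smul_tmul']

theorem Module.Basis.ext_tmul {ι : Type*} [Fintype ι] (b : Module.Basis ι C P)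
    {φ ψ : P ⊗[A] M →ₗ[C] N} (h : ∀ i m, φ (b i ⊗ₜ m) = ψ (b i ⊗ₜ m)) : φ = ψ := by
  ext x
  induction x using TensorProduct.induction_on with
  | zero => simp
  | tmul p m => simp only [b.tmul_eq_sum_repr_smul p m, map_sum, map_smul, h]
  | add x y hx hy => rw [map_add, map_add, hx, hy]

theorem IsHSBasis.tmul_smul [Algebra k A] [Algebra k C] {D : Fin (n + 1) → (A →ₗ[k] C)}
    (hb : IsHSBasis D b) (i : Fin (n + 1)) (a : A) (m : M) :
    b i ⊗ₜ[A] (a • m) =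
      ∑ j : Fin (n + 1), (if (j : ℕ) ≤ i then D (i.truncSub j) a else 0) • (b j ⊗ₜ[A] m) := by
  rw [← smul_tmul, hb a i, sum_tmul]
  simp only [smul_tmul']

variable [Module k M] [Module k N]

noncomputable def hsPairing (b : Module.Basis (Fin (n + 1)) C P)
    (Δ : Fin (n + 1) → (M →ₗ[k] N)) : P →+ M →+ N :=
  AddMonoidHom.mk'
    (fun p => AddMonoidHom.mk' (fun m => ∑ j, b.repr p j • Δ j m) fun m m' => by
      simp only [map_add, smul_add, Finset.sum_add_distrib])
    fun p p' => by ext m; simp [add_smul, Finset.sum_add_distrib]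

theorem hsPairing_apply (Δ : Fin (n + 1) → (M →ₗ[k] N)) (p : P) (m : M) :
    hsPairing b Δ p m = ∑ j, b.repr p j • Δ j m :=
  rfl

theorem hsPairing_smul (Δ : Fin (n + 1) → (M →ₗ[k] N)) (c : C) (p : P) (m : M) :
    hsPairing b Δ (c • p) m = c • hsPairing b Δ p m := by
  simp [hsPairing_apply, Finset.smul_sum, mul_smul]

theorem hsPairing_basis (Δ : Fin (n + 1) → (M →ₗ[k] N)) (j : Fin (n + 1)) (m : M) :
    hsPairing b Δ (b j) m = Δ j m := by
  simp [hsPairing_apply, Finsupp.single_apply, ite_smul]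

variable [Algebra k A] [Algebra k C] {D : Fin (n + 1) → (A →ₗ[k] C)}

/-- `Δ ∈ HS^n_D(M, N)`. -/
def IsHSDerivOver (D : Fin (n + 1) → (A →ₗ[k] C)) (Δ : Fin (n + 1) → (M →ₗ[k] N)) : Prop :=
  ∀ (i : Fin (n + 1)) (a : A) (m : M),
    Δ i (a • m) = ∑ p : Fin (n + 1), ∑ q : Fin (n + 1),
      if (p : ℕ) + q = i then D p a • Δ q m else 0

theorem hsPairing_balanced (hb : IsHSBasis D b) {Δ : Fin (n + 1) → (M →ₗ[k] N)}
    (hΔ : IsHSDerivOver D Δ) (a : A) (p : P) (m : M) :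
    hsPairing b Δ (a • p) m = hsPairing b Δ p (a • m) := by
  have on_basis : ∀ i, hsPairing b Δ (a • b i) m = hsPairing b Δ (b i) (a • m) := fun i => by
    rw [hb a i, hsPairing_apply, b.repr_sum_self, hsPairing_basis, hΔ, Fin.sum_sum_ite_add_eq]
    simp only [ite_smul, zero_smul]
  rw [← b.sum_repr p]
  simp only [Finset.smul_sum, smul_comm a, map_sum, AddMonoidHom.finsetSum_apply, hsPairing_smul,
    on_basis]

noncomputable def hsLift (hb : IsHSBasis D b) (Δ : Fin (n + 1) → (M →ₗ[k] N))
    (hΔ : IsHSDerivOver D Δ) : P ⊗[A] M →ₗ[C] N where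
  toFun := liftAddHom (hsPairing b Δ) (hsPairing_balanced hb hΔ)
  map_add' := map_add _
  map_smul' c x := by
    induction x using TensorProduct.induction_on with
    | zero => simp
    | tmul p m => exact hsPairing_smul Δ c p m
    | add x y hx hy => simp only [smul_add, map_add, hx, hy]

theorem hsLift_basis_tmul (hb : IsHSBasis D b) {Δ : Fin (n + 1) → (M →ₗ[k] N)}
    (hΔ : IsHSDerivOver D Δ) (j : Fin (n + 1)) (m : M) :
    hsLift hb Δ hΔ (b j ⊗ₜ m) = Δ j m :=
  hsPairing_basis Δ j m

variable [IsScalarTower k A M] [IsScalarTower k C N]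

theorem IsHSBasis.tmul_algebraMap_smul (hb : IsHSBasis D b) (r : k) (j : Fin (n + 1)) (m : M) :
    b j ⊗ₜ[A] (r • m) = algebraMap k C r • (b j ⊗ₜ[A] m) := by
  rw [← algebraMap_smul A r m, ← smul_tmul, hb.algebraMap_smul_basis, smul_tmul']

noncomputable def hsRestrict (hb : IsHSBasis D b) (φ : P ⊗[A] M →ₗ[C] N) (j : Fin (n + 1)) :
    M →ₗ[k] N where
  toFun m := φ (b j ⊗ₜ m)
  map_add' m m' := by rw [tmul_add, map_add]
  map_smul' r m := by rw [hb.tmul_algebraMap_smul, map_smul, algebraMap_smul, RingHom.id_apply]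

theorem isHSDerivOver_hsRestrict (hb : IsHSBasis D b) (φ : P ⊗[A] M →ₗ[C] N) :
    IsHSDerivOver D (hsRestrict hb φ) := fun i a m => by
  rw [Fin.sum_sum_ite_add_eq]
  change φ (b i ⊗ₜ (a • m)) = _
  rw [hb.tmul_smul, map_sum]
  refine Finset.sum_congr rfl fun j _ => ?_
  rw [map_smul, ite_smul, zero_smul]
  rfl

noncomputable def hsEquiv (hb : IsHSBasis D b) :
    {Δ : Fin (n + 1) → (M →ₗ[k] N) // IsHSDerivOver D Δ} ≃ (P ⊗[A] M →ₗ[C] N) where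
  toFun Δ := hsLift hb Δ.1 Δ.2
  invFun φ := ⟨hsRestrict hb φ, isHSDerivOver_hsRestrict hb φ⟩
  left_inv Δ := Subtype.ext <| funext fun j => LinearMap.ext fun m => hsLift_basis_tmul hb Δ.2 j m
  right_inv _ := b.ext_tmul fun j m => hsLift_basis_tmul hb _ j m

end Represent

theorem hs_module_represents_general (k A C : Type*) [CommRing k] [CommRing A] [CommRing C]
    [Algebra k A] [Algebra k C] (n : ℕ)
    (D : Fin (n + 1) → (A →ₗ[k] C))
    (P : Type*) [AddCommGroup P] [Module C P] [Module A P] [SMulCommClass A C P]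
    (b : Module.Basis (Fin (n + 1)) C P)
    (hsmul : ∀ (a : A) (i : Fin (n + 1)),
      a • b i = ∑ j : Fin (n + 1),
        (if (j : ℕ) ≤ (i : ℕ) then
          D ⟨(i : ℕ) - (j : ℕ), Nat.lt_of_le_of_lt (Nat.sub_le _ _) i.isLt⟩ a
        else 0) • b j)
    (M : Type*) [AddCommGroup M] [Module A M] [Module k M] [IsScalarTower k A M] :
    ∃ e : ∀ (N : Type w) [AddCommGroup N] [Module C N] [Module k N] [IsScalarTower k C N],
        {Δ : Fin (n + 1) → (M →ₗ[k] N) //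
          ∀ (i : Fin (n + 1)) (a : A) (m : M),
            Δ i (a • m) =
              ∑ p : Fin (n + 1), ∑ q : Fin (n + 1),
                if (p : ℕ) + (q : ℕ) = (i : ℕ) then D p a • Δ q m else 0} ≃
        (P ⊗[A] M →ₗ[C] N),
      ∀ (N : Type w) [AddCommGroup N] [Module C N] [Module k N] [IsScalarTower k C N]
        (Δ : {Δ : Fin (n + 1) → (M →ₗ[k] N) //
          ∀ (i : Fin (n + 1)) (a : A) (m : M),
            Δ i (a • m) =
              ∑ p : Fin (n + 1), ∑ q : Fin (n + 1),
                if (p : ℕ) + (q : ℕ) = (i : ℕ) then D p a • Δ q m else 0})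
        (j : Fin (n + 1)) (m : M),
        e N Δ (b j ⊗ₜ[A] m) = Δ.1 j m :=
  ⟨fun _ _ _ _ _ => hsEquiv hsmul, fun _ _ _ _ _ Δ j m => hsLift_basis_tmul hsmul Δ.2 j m⟩

/-- let `D ∈ HS^n_k(A,C)` and let `P_D` be the free `C`-module with basis
`e_0, …, e_n` endowed with the `A`-module structure (commuting with the `C`-action)
determined by `a • e_i = Σ_{j=0}^i D_{i-j}(a) • e_j`.  Then for every `A`-module `M` the
functor `N ↦ HS^n_D(M,N)` on `C`-modules is represented by the `C`-module `M ⊗_A P_D`: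
there are bijections `HS^n_D(M,N) ≃ Hom_C(M ⊗_A P_D, N)`, natural in `N`, sending `Δ` to
the map determined by `e_j ⊗ m ↦ Δ_j(m)`. -/
theorem hs_module_represents (k A C : Type*) [CommRing k] [CommRing A] [CommRing C]
    [Algebra k A] [Algebra k C] (n : ℕ)
    (D : Fin (n + 1) → (A →ₗ[k] C)) (hD : IsHSDeriv k n D)
    (P : Type*) [AddCommGroup P] [Module C P] [Module A P] [SMulCommClass A C P]
    (b : Module.Basis (Fin (n + 1)) C P)
    (hsmul : ∀ (a : A) (i : Fin (n + 1)),
      a • b i = ∑ j : Fin (n + 1),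
        (if (j : ℕ) ≤ (i : ℕ) then
          D ⟨(i : ℕ) - (j : ℕ), Nat.lt_of_le_of_lt (Nat.sub_le _ _) i.isLt⟩ a
        else 0) • b j)
    (M : Type*) [AddCommGroup M] [Module A M] [Module k M] [IsScalarTower k A M] :
    ∃ e : ∀ (N : Type w) [AddCommGroup N] [Module C N] [Module k N] [IsScalarTower k C N],
        {Δ : Fin (n + 1) → (M →ₗ[k] N) //
          ∀ (i : Fin (n + 1)) (a : A) (m : M),
            Δ i (a • m) =
              ∑ p : Fin (n + 1), ∑ q : Fin (n + 1),
                if (p : ℕ) + (q : ℕ) = (i : ℕ) then D p a • Δ q m else 0} ≃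
        (P ⊗[A] M →ₗ[C] N),
      ∀ (N : Type w) [AddCommGroup N] [Module C N] [Module k N] [IsScalarTower k C N]
        (Δ : {Δ : Fin (n + 1) → (M →ₗ[k] N) //
          ∀ (i : Fin (n + 1)) (a : A) (m : M),
            Δ i (a • m) =
              ∑ p : Fin (n + 1), ∑ q : Fin (n + 1),
                if (p : ℕ) + (q : ℕ) = (i : ℕ) then D p a • Δ q m else 0})
        (j : Fin (n + 1)) (m : M),
        e N Δ (b j ⊗ₜ[A] m) = Δ.1 j m :=
  hs_module_represents_general k A C n D P b hsmul M
end

section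
/- Let f : A → A' be a homomorphism of commutative k-algebras, n ∈ ℕ, D' ∈ HS^n_k(A',C), and set D = D'∘f (componentwise), which lies in HS^n_k(A,C). Then for every A-module M and every C-module N, the map sending Δ' ∈ HS^n_{D'}(M ⊗_A A', N) to the family (m ↦ Δ'_i(m ⊗ 1))_{i=0}^n is a bijection from HS^n_{D'}(M ⊗_A A', N) onto HS^n_D(M,N), natural in N. -/
open TensorProduct

/-! ### Auxiliary combinatorial lemmas -/

theorem hs_ite_sum {α N' : Type*} [AddCommMonoid N'] (c : Prop) [Decidable c]
    (s : Finset α) (f : α → N') :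
    (if c then ∑ x ∈ s, f x else 0) = ∑ x ∈ s, if c then f x else 0 := by
  split <;> simp

theorem hs_collapse {N' : Type*} [AddCommMonoid N'] (n c d e : ℕ) (he : e ≤ n) (x : N') :
    (∑ p : Fin (n+1), if ((p:ℕ) + d = e ∧ c = (p:ℕ)) then x else 0)
      = if c + d = e then x else 0 := by
  by_cases hc : c + d = e
  · rw [if_pos hc, Finset.sum_eq_single (⟨c, by omega⟩ : Fin (n+1))]
    · rw [if_pos ⟨by simpa using hc, rfl⟩]
    · intro b _ hb
      rw [if_neg]
      rintro ⟨-, h2⟩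
      exact hb (Fin.ext h2.symm)
    · intro h; exact absurd (Finset.mem_univ _) h
  · rw [if_neg hc]
    apply Finset.sum_eq_zero
    intro p _
    rw [if_neg]
    rintro ⟨h1, h2⟩
    omega

theorem hs_collapse' {N' : Type*} [AddCommMonoid N'] (n c d e : ℕ) (he : e ≤ n) (x : N') :
    (∑ p : Fin (n+1), if (d + (p:ℕ) = e ∧ c = (p:ℕ)) then x else 0)
      = if d + c = e then x else 0 := by
  have := hs_collapse n c d e he x
  simp only [add_comm] at this ⊢
  exact this

theorem hs_swap4 {N' : Type*} [AddCommMonoid N'] (n : ℕ) (i : Fin (n+1))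
    (F : Fin (n+1) → Fin (n+1) → Fin (n+1) → N') :
    (∑ p : Fin (n+1), ∑ q : Fin (n+1), if (p:ℕ) + (q:ℕ) = (i:ℕ) then
        (∑ r : Fin (n+1), ∑ s : Fin (n+1), if (r:ℕ) + (s:ℕ) = (p:ℕ) then F r s q else 0) else 0)
    = (∑ r : Fin (n+1), ∑ t : Fin (n+1), if (r:ℕ) + (t:ℕ) = (i:ℕ) then
        (∑ s : Fin (n+1), ∑ q : Fin (n+1), if (s:ℕ) + (q:ℕ) = (t:ℕ) then F r s q else 0) else 0) := by
  have hi : (i:ℕ) ≤ n := by omega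
  have L : (∑ p : Fin (n+1), ∑ q : Fin (n+1), if (p:ℕ) + (q:ℕ) = (i:ℕ) then
        (∑ r : Fin (n+1), ∑ s : Fin (n+1), if (r:ℕ) + (s:ℕ) = (p:ℕ) then F r s q else 0) else 0)
      = ∑ q : Fin (n+1), ∑ r : Fin (n+1), ∑ s : Fin (n+1),
          if ((r:ℕ) + (s:ℕ)) + (q:ℕ) = (i:ℕ) then F r s q else 0 := by
    simp only [hs_ite_sum, ← ite_and]
    rw [Finset.sum_comm]
    refine Finset.sum_congr rfl fun q _ => ?_
    rw [Finset.sum_comm]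
    refine Finset.sum_congr rfl fun r _ => ?_
    rw [Finset.sum_comm]
    refine Finset.sum_congr rfl fun s _ => ?_
    exact hs_collapse n _ _ _ hi _
  have R : (∑ r : Fin (n+1), ∑ t : Fin (n+1), if (r:ℕ) + (t:ℕ) = (i:ℕ) then
        (∑ s : Fin (n+1), ∑ q : Fin (n+1), if (s:ℕ) + (q:ℕ) = (t:ℕ) then F r s q else 0) else 0)
      = ∑ r : Fin (n+1), ∑ s : Fin (n+1), ∑ q : Fin (n+1),
          if (r:ℕ) + ((s:ℕ) + (q:ℕ)) = (i:ℕ) then F r s q else 0 := by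
    simp only [hs_ite_sum, ← ite_and]
    refine Finset.sum_congr rfl fun r _ => ?_
    rw [Finset.sum_comm]
    refine Finset.sum_congr rfl fun s _ => ?_
    rw [Finset.sum_comm]
    refine Finset.sum_congr rfl fun q _ => ?_
    exact hs_collapse' n _ _ _ hi _
  rw [L, R]
  rw [Finset.sum_comm]
  refine Finset.sum_congr rfl fun r _ => ?_
  rw [Finset.sum_comm]
  refine Finset.sum_congr rfl fun s _ => ?_
  refine Finset.sum_congr rfl fun q _ => ?_
  rw [add_assoc]

/-! ### The twisted action -/

section HSMul

variable {k A' C : Type*} [CommRing k] [CommRing A'] [CommRing C]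
    [Algebra k A'] [Algebra k C] {n : ℕ} (D' : Fin (n + 1) → (A' →ₗ[k] C))

theorem hs_D_one (hD' : IsHSDeriv k n D') (p : Fin (n+1)) :
    D' p 1 = if p = 0 then 1 else 0 := by
  suffices H : ∀ m : ℕ, ∀ p : Fin (n+1), (p:ℕ) = m → D' p 1 = if p = 0 then 1 else 0 from
    H p p rfl
  intro m
  induction m using Nat.strong_induction_on with
  | _ m ih =>
    intro p hp
    rcases eq_or_ne p 0 with h0 | h0
    · subst h0; simp [hD'.1]
    · rw [if_neg h0]
      have h2 := hD'.2 p 1 1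
      rw [one_mul] at h2
      have hz : ∀ r : Fin (n+1), r ≠ 0 → (r:ℕ) < m → D' r 1 = 0 := by
        intro r hr hrm
        rw [ih r hrm r rfl, if_neg hr]
      have hp0 : (0 : Fin (n+1)) ≠ p := fun h => h0 h.symm
      have key : (∑ r : Fin (n+1), ∑ s : Fin (n+1),
          if (r:ℕ) + (s:ℕ) = (p:ℕ) then D' r 1 * D' s 1 else 0)
          = D' 0 1 * D' p 1 + D' p 1 * D' 0 1 := by
        rw [← Finset.sum_subset (Finset.subset_univ ({0, p} : Finset (Fin (n+1))))]
        · rw [Finset.sum_pair hp0]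
          have e1 : (∑ s : Fin (n+1), if ((0:Fin (n+1)):ℕ) + (s:ℕ) = (p:ℕ)
              then D' 0 1 * D' s 1 else 0) = D' 0 1 * D' p 1 := by
            rw [Finset.sum_eq_single p]
            · simp
            · intro b _ hb
              rw [if_neg]
              simp only [Fin.val_zero, zero_add]
              exact fun h => hb (Fin.ext h)
            · intro h; exact absurd (Finset.mem_univ _) h
          have e2 : (∑ s : Fin (n+1), if (p:ℕ) + (s:ℕ) = (p:ℕ)
              then D' p 1 * D' s 1 else 0) = D' p 1 * D' 0 1 := by
            rw [Finset.sum_eq_single 0]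
            · simp
            · intro b _ hb
              rw [if_neg]
              intro h
              apply hb
              ext
              simp only [Fin.val_zero]
              omega
            · intro h; exact absurd (Finset.mem_univ _) h
          rw [e1, e2]
        · intro r _ hr
          simp only [Finset.mem_insert, Finset.mem_singleton, not_or] at hr
          apply Finset.sum_eq_zero
          intro s _
          split
          · rename_i hrs
            rcases eq_or_ne s 0 with hs | hs
            · exact absurd (Fin.ext (by subst hs; simpa using hrs)) hr.2
            · have : (s:ℕ) < m := by
                have : (r:ℕ) ≠ 0 := fun h => hr.1 (Fin.ext h)
                omega
              rw [hz s hs this, mul_zero]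
          · rfl
      rw [key, hD'.1, one_mul, mul_one] at h2
      have : D' p 1 + D' p 1 = D' p 1 + 0 := by rw [add_zero]; exact h2.symm
      exact (add_left_cancel this)

variable {N : Type*} [AddCommGroup N] [Module C N] [Module k N] [IsScalarTower k C N]

/-- The twisted action of `A'` on `N^{n+1}`. -/
def hsMul (a' : A') (ν : Fin (n+1) → N) : Fin (n+1) → N :=
  fun i => ∑ p : Fin (n+1), ∑ q : Fin (n+1),
    if (p:ℕ) + (q:ℕ) = (i:ℕ) then D' p a' • ν q else 0

theorem hsMul_add (a' : A') (ν μ : Fin (n+1) → N) :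
    hsMul D' a' (ν + μ) = hsMul D' a' ν + hsMul D' a' μ := by
  funext i
  simp only [hsMul, Pi.add_apply, smul_add, ← Finset.sum_add_distrib]
  refine Finset.sum_congr rfl fun p _ => Finset.sum_congr rfl fun q _ => ?_
  split <;> simp

theorem hsMul_zero (a' : A') : hsMul D' a' (0 : Fin (n+1) → N) = 0 := by
  funext i
  simp [hsMul]

theorem add_hsMul (a' b' : A') (ν : Fin (n+1) → N) :
    hsMul D' (a' + b') ν = hsMul D' a' ν + hsMul D' b' ν := by
  funext i
  simp only [hsMul, map_add, add_smul, Pi.add_apply, ← Finset.sum_add_distrib]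
  refine Finset.sum_congr rfl fun p _ => Finset.sum_congr rfl fun q _ => ?_
  split <;> simp

theorem mul_hsMul (hD' : IsHSDeriv k n D') (a' b' : A') (ν : Fin (n+1) → N) :
    hsMul D' (a' * b') ν = hsMul D' a' (hsMul D' b' ν) := by
  funext i
  show (∑ p : Fin (n+1), ∑ q : Fin (n+1),
      if (p:ℕ) + (q:ℕ) = (i:ℕ) then D' p (a' * b') • ν q else 0) = _
  simp only [hD'.2, Finset.sum_smul, ite_smul, zero_smul]
  rw [hs_swap4 n i (fun r s q => (D' r a' * D' s b') • ν q)]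
  show _ = ∑ r : Fin (n+1), ∑ t : Fin (n+1),
      if (r:ℕ) + (t:ℕ) = (i:ℕ) then D' r a' • hsMul D' b' ν t else 0
  simp only [hsMul, Finset.smul_sum, smul_ite_zero, mul_smul]

theorem hsMul_diag (u : C) (a' : A') (h : ∀ p : Fin (n+1), D' p a' = if p = 0 then u else 0)
    (ν : Fin (n+1) → N) : hsMul D' a' ν = fun i => u • ν i := by
  funext i
  simp only [hsMul, h, ite_smul, zero_smul]
  rw [Finset.sum_eq_single (0 : Fin (n+1))]
  · rw [Finset.sum_eq_single i]
    · simp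
    · intro b _ hb
      rw [if_neg]
      simp only [Fin.val_zero, zero_add]
      exact fun h' => hb (Fin.ext h')
    · intro h; exact absurd (Finset.mem_univ _) h
  · intro p _ hp
    apply Finset.sum_eq_zero
    intro q _
    simp [hp]
  · intro h; exact absurd (Finset.mem_univ _) h

theorem one_hsMul (hD' : IsHSDeriv k n D') (ν : Fin (n+1) → N) :
    hsMul D' (1 : A') ν = ν := by
  rw [hsMul_diag D' 1 1 (hs_D_one D' hD')]
  funext i
  exact one_smul C (ν i)

theorem algebraMap_hsMul (hD' : IsHSDeriv k n D') (c : k) (ν : Fin (n+1) → N) :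
    hsMul D' (algebraMap k A' c) ν = c • ν := by
  rw [hsMul_diag D' (algebraMap k C c) (algebraMap k A' c) ?_ ν]
  · funext i
    exact (algebraMap_smul C c (ν i)).symm ▸ rfl
  · intro p
    have : (algebraMap k A' c) = c • (1 : A') := by
      rw [Algebra.algebraMap_eq_smul_one]
    rw [this, map_smul, hs_D_one D' hD']
    split
    · exact (Algebra.algebraMap_eq_smul_one c).symm
    · exact smul_zero c

end HSMul

/-- let `f : A → A'` be a homomorphism of commutative `k`-algebras (i.e. `A'`
an `A`-algebra compatibly with `k`), `D' ∈ HS^n_k(A',C)`, and `D = D' ∘ f` componentwise,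
which lies in `HS^n_k(A,C)`.  For every `A`-module `M` and `C`-module `N`, the map
`Δ' ↦ (m ↦ Δ'_i(1 ⊗ m))_i` is a bijection from `HS^n_{D'}(A' ⊗_A M, N)` onto
`HS^n_D(M,N)`, natural in `N`. -/
theorem hs_over_base_change
    (k A A' C : Type*) [CommRing k] [CommRing A] [CommRing A'] [CommRing C]
    [Algebra k A] [Algebra k A'] [Algebra k C] [Algebra A A'] [IsScalarTower k A A']
    (n : ℕ) (D' : Fin (n + 1) → (A' →ₗ[k] C)) (hD' : IsHSDeriv k n D')
    (M : Type*) [AddCommGroup M] [Module A M] [Module k M] [IsScalarTower k A M]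
    (N : Type*) [AddCommGroup N] [Module C N] [Module k N] [IsScalarTower k C N] :
    IsHSDeriv k n
      (fun i => (D' i) ∘ₗ (IsScalarTower.toAlgHom k A A').toLinearMap) ∧
    ∃ e : {Δ' : Fin (n + 1) → (A' ⊗[A] M →ₗ[k] N) //
            ∀ (i : Fin (n + 1)) (a' : A') (x : A' ⊗[A] M),
              Δ' i (a' • x) =
                ∑ p : Fin (n + 1), ∑ q : Fin (n + 1),
                  if (p : ℕ) + (q : ℕ) = (i : ℕ) then D' p a' • Δ' q x else 0} ≃
        {Δ : Fin (n + 1) → (M →ₗ[k] N) //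
          ∀ (i : Fin (n + 1)) (a : A) (m : M),
            Δ i (a • m) =
              ∑ p : Fin (n + 1), ∑ q : Fin (n + 1),
                if (p : ℕ) + (q : ℕ) = (i : ℕ) then
                  D' p (algebraMap A A' a) • Δ q m
                else 0},
      ∀ (Δ' : {Δ' : Fin (n + 1) → (A' ⊗[A] M →ₗ[k] N) //
            ∀ (i : Fin (n + 1)) (a' : A') (x : A' ⊗[A] M),
              Δ' i (a' • x) =
                ∑ p : Fin (n + 1), ∑ q : Fin (n + 1),
                  if (p : ℕ) + (q : ℕ) = (i : ℕ) then D' p a' • Δ' q x else 0})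
        (i : Fin (n + 1)) (m : M),
        (e Δ').1 i m = Δ'.1 i ((1 : A') ⊗ₜ[A] m) := by
  constructor
  · constructor
    · simp [hD'.1]
    · intro i a b
      simp only [LinearMap.comp_apply, AlgHom.toLinearMap_apply, map_mul]
      exact hD'.2 i _ _
  · -- set up the twisted module structure on `Fin (n+1) → N`
    letI : SMul A' (Fin (n+1) → N) := ⟨hsMul D'⟩
    letI : Module A' (Fin (n+1) → N) :=
      Module.ofMinimalAxioms (hsMul_add D') (add_hsMul D') (mul_hsMul D' hD')
        (one_hsMul D' hD')
    letI : Module A (Fin (n+1) → N) := Module.compHom _ (algebraMap A A')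
    have hsmulA : ∀ (a : A) (ν : Fin (n+1) → N),
        a • ν = hsMul D' (algebraMap A A' a) ν := fun _ _ => rfl
    letI : IsScalarTower k A (Fin (n+1) → N) := by
      constructor
      intro c a ν
      rw [hsmulA, hsmulA]
      have h1 : algebraMap A A' (c • a) = algebraMap k A' c * algebraMap A A' a := by
        rw [Algebra.smul_def, map_mul, ← IsScalarTower.algebraMap_apply]
      rw [h1, mul_hsMul D' hD', algebraMap_hsMul D' hD']
    -- the subtype abbreviations
    -- construct Ψ for each Δ
    have hΨ : ∀ (Δ : {Δ : Fin (n + 1) → (M →ₗ[k] N) //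
          ∀ (i : Fin (n + 1)) (a : A) (m : M),
            Δ i (a • m) =
              ∑ p : Fin (n + 1), ∑ q : Fin (n + 1),
                if (p : ℕ) + (q : ℕ) = (i : ℕ) then
                  D' p (algebraMap A A' a) • Δ q m
                else 0}),
        ∃ Ψ : (A' ⊗[A] M) →ₗ[A] (Fin (n+1) → N),
          ∀ (a' : A') (m : M), Ψ (a' ⊗ₜ[A] m) = hsMul D' a' (fun i => Δ.1 i m) := by
      intro Δ
      have hΔ : ∀ (a : A) (m : M),
          (fun i => Δ.1 i (a • m)) = hsMul D' (algebraMap A A' a) (fun i => Δ.1 i m) := by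
        intro a m
        funext i
        rw [Δ.2 i a m]
        rfl
      refine ⟨TensorProduct.lift (LinearMap.mk₂ A
        (fun a' m => hsMul D' a' (fun i => Δ.1 i m)) ?_ ?_ ?_ ?_), fun a' m => ?_⟩
      · intro a' b' m; exact add_hsMul D' a' b' _
      · intro a a' m
        beta_reduce
        rw [Algebra.smul_def, mul_hsMul D' hD']
        rfl
      · intro a' m m'
        beta_reduce
        have h3 : (fun i => Δ.1 i (m + m')) = (fun i => Δ.1 i m) + fun i => Δ.1 i m' := by
          funext i; simp
        rw [h3, hsMul_add]
      · intro a a' m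
        beta_reduce
        rw [hΔ a m, ← mul_hsMul D' hD', mul_comm, mul_hsMul D' hD']
        rfl
      · rw [TensorProduct.lift.tmul]
        rfl
    choose Ψ hΨ using hΨ
    have hΨs : ∀ Δ (a' : A') (x : A' ⊗[A] M), Ψ Δ (a' • x) = hsMul D' a' (Ψ Δ x) := by
      intro Δ a' x
      induction x using TensorProduct.induction_on with
      | zero => rw [smul_zero, map_zero, hsMul_zero]
      | tmul b' m => rw [smul_tmul', hΨ, hΨ, smul_eq_mul, mul_hsMul D' hD']
      | add x y hx hy => rw [smul_add, map_add, hx, hy, map_add, hsMul_add]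
    refine ⟨⟨fun Δ' => ⟨fun i => (Δ'.1 i).comp
        ((TensorProduct.mk A A' M 1).restrictScalars k), ?_⟩,
      fun Δ => ⟨fun i => (LinearMap.proj i).comp ((Ψ Δ).restrictScalars k), ?_⟩,
      ?_, ?_⟩, fun Δ' i m => rfl⟩
    · -- property of the forward map
      intro i a m
      simp only [LinearMap.comp_apply, LinearMap.restrictScalars_apply,
        TensorProduct.mk_apply]
      have h1 : (1:A') ⊗ₜ[A] (a • m) = (algebraMap A A' a) • ((1:A') ⊗ₜ[A] m) := by
        rw [tmul_smul, algebraMap_smul]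
      rw [h1, Δ'.2 i (algebraMap A A' a) _]
    · -- property of the inverse map
      intro i a' x
      simp only [LinearMap.comp_apply, LinearMap.restrictScalars_apply, LinearMap.proj_apply]
      rw [hΨs]
      rfl
    · -- left inverse
      intro Δ'
      apply Subtype.ext
      funext i
      apply LinearMap.ext
      intro x
      simp only [LinearMap.comp_apply, LinearMap.restrictScalars_apply, LinearMap.proj_apply]
      induction x using TensorProduct.induction_on with
      | zero => simp
      | tmul a' m =>
        rw [hΨ]
        have h2 : a' ⊗ₜ[A] m = a' • ((1:A') ⊗ₜ[A] m) := by
          rw [smul_tmul', smul_eq_mul, mul_one]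
        conv_rhs => rw [h2, Δ'.2 i a' _]
        rfl
      | add x y hx hy => simp only [map_add, Pi.add_apply, hx, hy]
    · -- right inverse
      intro Δ
      apply Subtype.ext
      funext i
      apply LinearMap.ext
      intro m
      simp only [LinearMap.comp_apply, LinearMap.restrictScalars_apply, LinearMap.proj_apply,
        TensorProduct.mk_apply]
      rw [hΨ, one_hsMul D' hD']
end

section
/- Let n ∈ ℕ, D ∈ HS^n_k(A,C), and let P_D be the free C-module with basis e_0,…,e_n endowed with the A-module structure determined by a·(Σ_i c_i e_i) = Σ_i c_i·(Σ_{j=0}^i D_{i-j}(a)·e_j). If M is a projective A-module, then M ⊗_A P_D is a projective C-module; if M is a free A-module, then M ⊗_A P_D is a free C-module. -/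
open TensorProduct

/-! `P ⊗[A] M` is a `C`-module through the left factor, and every construction that only touches
the right factor is `C`-linear. Writing `M` as a direct summand of a free module `ι →₀ A` thus
exhibits `P ⊗[A] M` as a `C`-direct summand of `P ⊗[A] (ι →₀ A) ≃ ι →₀ P`. -/

section SMulCommClass

variable {A : Type*} (C : Type*) [CommSemiring A] [Semiring C]
  {P : Type*} [AddCommMonoid P] [Module A P] [Module C P] [SMulCommClass A C P]
  {M N : Type*} [AddCommMonoid M] [Module A M] [AddCommMonoid N] [Module A N]

namespace LinearMap

noncomputable def lTensorOfSMulComm (f : M →ₗ[A] N) : P ⊗[A] M →ₗ[C] P ⊗[A] N where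
  toFun := f.lTensor P
  map_add' := map_add _
  map_smul' c x := by
    induction x with
    | zero => simp
    | tmul p m => simp [smul_tmul']
    | add x y hx hy => simp only [smul_add, map_add, hx, hy, RingHom.id_apply]

@[simp]
theorem lTensorOfSMulComm_apply (f : M →ₗ[A] N) (x : P ⊗[A] M) :
    lTensorOfSMulComm C f x = f.lTensor P x :=
  rfl

theorem lTensorOfSMulComm_comp {Q : Type*} [AddCommMonoid Q] [Module A Q]
    (g : N →ₗ[A] Q) (f : M →ₗ[A] N) :
    lTensorOfSMulComm (P := P) C (g ∘ₗ f) = lTensorOfSMulComm C g ∘ₗ lTensorOfSMulComm C f :=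
  LinearMap.ext (lTensor_comp_apply P g f)

theorem lTensorOfSMulComm_id : lTensorOfSMulComm (P := P) C (LinearMap.id : M →ₗ[A] M) = .id :=
  LinearMap.ext fun x ↦ by simp

end LinearMap

open LinearMap

noncomputable def LinearEquiv.lTensorOfSMulComm (e : M ≃ₗ[A] N) : P ⊗[A] M ≃ₗ[C] P ⊗[A] N :=
  .ofLinearMap (LinearMap.lTensorOfSMulComm C e.toLinearMap)
    (LinearMap.lTensorOfSMulComm C e.symm.toLinearMap)
    (by rw [← lTensorOfSMulComm_comp, e.comp_symm, lTensorOfSMulComm_id])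
    (by rw [← lTensorOfSMulComm_comp, e.symm_comp, lTensorOfSMulComm_id])

noncomputable def TensorProduct.finsuppScalarRightOfSMulComm (ι : Type*) [DecidableEq ι] :
    P ⊗[A] (ι →₀ A) ≃ₗ[C] ι →₀ P where
  __ := finsuppScalarRight A A P ι
  map_smul' c x := by
    induction x with
    | zero => simp
    | tmul p f =>
      ext i
      simp [smul_tmul', smul_comm]
    | add x y hx hy => simp_all only [smul_add, AddHom.toFun_eq_coe, map_add]

theorem Module.Free.tensorProduct_of_smulCommClass [Module.Free C P] [Module.Free A M] :
    Module.Free C (P ⊗[A] M) :=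
  have := Classical.decEq (Module.Free.ChooseBasisIndex A M)
  .of_equiv ((LinearEquiv.lTensorOfSMulComm C (Module.Free.chooseBasis A M).repr).trans
    (finsuppScalarRightOfSMulComm C _)).symm

theorem Module.Projective.tensorProduct_of_smulCommClass [Module.Projective C P]
    [Module.Projective A M] : Module.Projective C (P ⊗[A] M) := by
  classical
  obtain ⟨s, hs⟩ := ‹Module.Projective A M›
  have : Module.Projective C (M →₀ P) := .of_equiv (finsuppLequivDFinsupp C).symm
  have : Module.Projective C (P ⊗[A] (M →₀ A)) :=
    .of_equiv (finsuppScalarRightOfSMulComm C M).symm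
  refine .of_split (lTensorOfSMulComm C s)
    (lTensorOfSMulComm C (Finsupp.linearCombination A id)) ?_
  have hsplit : Finsupp.linearCombination A id ∘ₗ s = .id := LinearMap.ext hs
  rw [← lTensorOfSMulComm_comp, hsplit, lTensorOfSMulComm_id]

end SMulCommClass

theorem hs_module_projective_free_general
    (A C : Type*) [CommRing A] [CommRing C] (n : ℕ)
    (P : Type*) [AddCommGroup P] [Module C P] [Module A P] [SMulCommClass A C P]
    (b : Module.Basis (Fin (n + 1)) C P)
    (M : Type*) [AddCommGroup M] [Module A M] :
    (Module.Projective A M → Module.Projective C (P ⊗[A] M)) ∧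
    (Module.Free A M → Module.Free C (P ⊗[A] M)) := by
  have : Module.Free C P := .of_basis b
  exact ⟨fun _ ↦ .tensorProduct_of_smulCommClass C, fun _ ↦ .tensorProduct_of_smulCommClass C⟩

/-- let `D ∈ HS^n_k(A,C)` and `P_D` the free `C`-module with basis
`e_0,…,e_n`, endowed with the `A`-module structure (commuting with the `C`-action)
determined by `a • e_i = Σ_{j=0}^i D_{i-j}(a) • e_j`.  If `M` is a projective `A`-module
then `M ⊗_A P_D` is a projective `C`-module, and if `M` is free then so is `M ⊗_A P_D`. -/
theorem hs_module_projective_free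
    (k A C : Type*) [CommRing k] [CommRing A] [CommRing C]
    [Algebra k A] [Algebra k C] (n : ℕ)
    (D : Fin (n + 1) → (A →ₗ[k] C)) (hD : IsHSDeriv k n D)
    (P : Type*) [AddCommGroup P] [Module C P] [Module A P] [SMulCommClass A C P]
    (b : Module.Basis (Fin (n + 1)) C P)
    (hsmul : ∀ (a : A) (i : Fin (n + 1)),
      a • b i = ∑ j : Fin (n + 1),
        (if (j : ℕ) ≤ (i : ℕ) then
          D ⟨(i : ℕ) - (j : ℕ), Nat.lt_of_le_of_lt (Nat.sub_le _ _) i.isLt⟩ a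
        else 0) • b j)
    (M : Type*) [AddCommGroup M] [Module A M] :
    (Module.Projective A M → Module.Projective C (P ⊗[A] M)) ∧
    (Module.Free A M → Module.Free C (P ⊗[A] M)) :=
  hs_module_projective_free_general A C n P b M
end
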